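/- For the 2×2 matrix X(t) = [[1, g − g⁻¹],[0,1]] with g = g(t) ≥ 1, the largest singular value σ_1(t) satisfies g(t) ≤ σ_1(t) ≤ g(t) + g(t)⁻¹ + 1; consequently if lim_{t→∞}(1/t)·ln g(t) = α ≥ 0 exists, the Lyapunov exponents of X(t) are α and −α, while the Lyapunov characteristic exponents of the columns are 0 and α. -/

import Mathlib

open Matrix Filter

/-- Removed from Mathlib; restated with its old meaning. -/
theorem Matrix.isHermitian_transpose_mul_self {α : Type*} {n : Type*} [Fintype n] [CommSemiring α]
    [StarRing α] [TrivialStar α] (A : Matrix n n α) : (Aᵀ * A).IsHermitian := by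
  simp [Matrix.IsHermitian, Matrix.conjTranspose_mul, Matrix.conjTranspose_eq_transpose_of_trivial]

/-- The k-th largest singular value (0-indexed) of a real square matrix:
square roots of the eigenvalues of `Xᵀ * X`, sorted in decreasing order. -/
noncomputable def svalDesc {n : ℕ} (X : Matrix (Fin n) (Fin n) ℝ) (k : Fin n) : ℝ :=
  Real.sqrt (((Matrix.isHermitian_transpose_mul_self X).eigenvalues ∘
    Tuple.sort ((Matrix.isHermitian_transpose_mul_self X).eigenvalues)) k.rev)

/-- Euclidean norm of the j-th column of X. -/
noncomputable def colNorm {n : ℕ} (X : Matrix (Fin n) (Fin n) ℝ) (j : Fin n) : ℝ :=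
  Real.sqrt (∑ i, (X i j) ^ 2)

/-!
`X = !![1, g - g⁻¹; 0, 1]` has determinant `1` and `tr (Xᵀ X) = 2 + (g - g⁻¹)² = g² + g⁻²`,
so the eigenvalues of `Xᵀ X` are exactly `g²` and `g⁻²` and the singular values are `g` and `g⁻¹`.
The first column of `X` is a unit vector, while the second has norm `√(g² - 1 + g⁻²)`, which
lies between `g / 2` and `g`, so it grows at the same exponential rate as `g`.
-/

open Real Topology

lemma Equiv.Perm.eq_one_or_eq_swap_fin_two (σ : Equiv.Perm (Fin 2)) :
    σ = 1 ∨ σ = Equiv.swap 0 1 := by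
  revert σ; decide

lemma Tuple.comp_sort_fin_two {α : Type*} [LinearOrder α] (f : Fin 2 → α) :
    (f ∘ Tuple.sort f) 0 = min (f 0) (f 1) ∧ (f ∘ Tuple.sort f) 1 = max (f 0) (f 1) := by
  have hmono : (f ∘ Tuple.sort f) 0 ≤ (f ∘ Tuple.sort f) 1 := Tuple.monotone_sort f zero_le_one
  rcases (Tuple.sort f).eq_one_or_eq_swap_fin_two with hσ | hσ <;>
    simp only [hσ, Function.comp_apply, Equiv.Perm.coe_one, id, Equiv.swap_apply_left,
      Equiv.swap_apply_right] at hmono ⊢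
  · exact ⟨(min_eq_left hmono).symm, (max_eq_right hmono).symm⟩
  · exact ⟨(min_eq_right hmono).symm, (max_eq_left hmono).symm⟩

lemma max_min_eq_of_add_eq_of_mul_eq {α : Type*} [CommRing α] [IsDomain α] [LinearOrder α] {x y a b : α}
    (hsum : x + y = a + b) (hprod : x * y = a * b) :
    max x y = max a b ∧ min x y = min a b := by
  have hroot : (x - a) * (x - b) = 0 := by linear_combination x * hsum - hprod
  rcases mul_eq_zero.mp hroot with hxa | hxb
  · obtain rfl : x = a := sub_eq_zero.mp hxa
    obtain rfl : y = b := by linear_combination hsum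
    exact ⟨rfl, rfl⟩
  · obtain rfl : x = b := sub_eq_zero.mp hxb
    obtain rfl : y = a := by linear_combination hsum
    exact ⟨max_comm _ _, min_comm _ _⟩

lemma Matrix.IsHermitian.eigenvalues_fin_two {A : Matrix (Fin 2) (Fin 2) ℝ} (hA : A.IsHermitian) :
    hA.eigenvalues 0 + hA.eigenvalues 1 = A.trace ∧ hA.eigenvalues 0 * hA.eigenvalues 1 = A.det := by
  simp [hA.trace_eq_sum_eigenvalues, hA.det_eq_prod_eigenvalues, Fin.sum_univ_two]

lemma svalDesc_fin_two (X : Matrix (Fin 2) (Fin 2) ℝ) :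
    svalDesc X 0 = √(max ((isHermitian_transpose_mul_self X).eigenvalues 0)
      ((isHermitian_transpose_mul_self X).eigenvalues 1)) ∧
    svalDesc X 1 = √(min ((isHermitian_transpose_mul_self X).eigenvalues 0)
      ((isHermitian_transpose_mul_self X).eigenvalues 1)) := by
  obtain ⟨hmin, hmax⟩ := Tuple.comp_sort_fin_two (isHermitian_transpose_mul_self X).eigenvalues
  exact ⟨congrArg Real.sqrt hmax, congrArg Real.sqrt hmin⟩

lemma svalDesc_fin_two_eq {X : Matrix (Fin 2) (Fin 2) ℝ} {s r : ℝ} (hr : 0 ≤ r) (hrs : r ≤ s)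
    (htr : (Xᵀ * X).trace = s ^ 2 + r ^ 2) (hdet : X.det ^ 2 = (s * r) ^ 2) :
    svalDesc X 0 = s ∧ svalDesc X 1 = r := by
  obtain ⟨hsum, hprod⟩ := (isHermitian_transpose_mul_self X).eigenvalues_fin_two
  rw [htr] at hsum
  rw [det_mul, det_transpose, ← sq, hdet, mul_pow] at hprod
  obtain ⟨hmax, hmin⟩ := max_min_eq_of_add_eq_of_mul_eq hsum hprod
  have hsq : r ^ 2 ≤ s ^ 2 := pow_le_pow_left₀ hr hrs 2
  obtain ⟨hσ₁, hσ₂⟩ := svalDesc_fin_two X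
  rw [hσ₁, hσ₂, hmax, hmin, max_eq_left hsq, min_eq_right hsq,
    sqrt_sq (hr.trans hrs), sqrt_sq hr]
  exact ⟨rfl, rfl⟩

lemma svalDesc_shear {g : ℝ} (hg : 1 ≤ g) :
    svalDesc !![(1 : ℝ), g - g⁻¹; 0, 1] 0 = g ∧ svalDesc !![(1 : ℝ), g - g⁻¹; 0, 1] 1 = g⁻¹ := by
  have hg0 : g ≠ 0 := (zero_lt_one.trans_le hg).ne'
  refine svalDesc_fin_two_eq (by positivity) (inv_le_one_of_one_le₀ hg |>.trans hg) ?_ ?_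
  · simp only [trace_fin_two, Matrix.mul_apply, transpose_apply, of_apply, cons_val', cons_val_zero,
      cons_val_one, cons_val_fin_one, Fin.sum_univ_two, Fin.isValue, mul_one, mul_zero, add_zero]
    field_simp
    ring
  · simp [det_fin_two, hg0]

lemma colNorm_shear (a : ℝ) :
    colNorm !![(1 : ℝ), a; 0, 1] 0 = 1 ∧ colNorm !![(1 : ℝ), a; 0, 1] 1 = √(a ^ 2 + 1) := by
  simp [colNorm, Fin.sum_univ_two]

lemma sqrt_sub_inv_sq_add_one_mem_Icc {g : ℝ} (hg : 1 ≤ g) :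
    √((g - g⁻¹) ^ 2 + 1) ∈ Set.Icc (g / 2) g := by
  have hg0 : 0 < g := zero_lt_one.trans_le hg
  have hinv : g * g⁻¹ = 1 := mul_inv_cancel₀ hg0.ne'
  constructor
  · rw [le_sqrt (by positivity) (by positivity)]
    nlinarith
  · rw [sqrt_le_left hg0.le]
    nlinarith [inv_pos.mpr hg0]

lemma abs_log_sub_log_le_log {x y C : ℝ} (hx : 0 < x) (hy : 0 < y) (hxy : x ≤ C * y)
    (hyx : y ≤ C * x) : |log x - log y| ≤ log C := by
  have hC : 0 < C := pos_of_mul_pos_left (hx.trans_le hxy) hy.le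
  have h₁ := log_le_log hx hxy
  have h₂ := log_le_log hy hyx
  rw [log_mul hC.ne' hy.ne'] at h₁
  rw [log_mul hC.ne' hx.ne'] at h₂
  exact abs_sub_le_iff.mpr ⟨by linarith, by linarith⟩

lemma tendsto_one_div_mul_log_of_abs_log_sub_le {f G : ℝ → ℝ} {α K : ℝ}
    (hK : ∀ᶠ t in atTop, |log (f t) - log (G t)| ≤ K)
    (hG : Tendsto (fun t => 1 / t * log (G t)) atTop (𝓝 α)) :
    Tendsto (fun t => 1 / t * log (f t)) atTop (𝓝 α) := by
  have hdiff : Tendsto (fun t => 1 / t * (log (f t) - log (G t))) atTop (𝓝 0) := by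
    refine Tendsto.zero_mul_isBoundedUnder_le ?_ (isBoundedUnder_of_eventually_le (a := K) hK)
    exact tendsto_inv_atTop_zero.congr fun t => (one_div t).symm
  simpa using (hG.add hdiff).congr fun t => by ring

theorem example_LE_vs_LCE_general (g : ℝ → ℝ) (hg : ∀ t, 1 ≤ g t) (α : ℝ)
    (hlim : Tendsto (fun t : ℝ => (1 / t) * Real.log (g t)) atTop (nhds α)) :
    (∀ t, g t ≤ svalDesc !![(1 : ℝ), g t - (g t)⁻¹; 0, 1] 0 ∧
      svalDesc !![(1 : ℝ), g t - (g t)⁻¹; 0, 1] 0 ≤ g t + (g t)⁻¹ + 1) ∧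
    Tendsto (fun t : ℝ => (1 / t) * Real.log (svalDesc !![(1 : ℝ), g t - (g t)⁻¹; 0, 1] 0))
      atTop (nhds α) ∧
    Tendsto (fun t : ℝ => (1 / t) * Real.log (svalDesc !![(1 : ℝ), g t - (g t)⁻¹; 0, 1] 1))
      atTop (nhds (-α)) ∧
    Tendsto (fun t : ℝ => (1 / t) * Real.log (colNorm !![(1 : ℝ), g t - (g t)⁻¹; 0, 1] 0))
      atTop (nhds 0) ∧
    Tendsto (fun t : ℝ => (1 / t) * Real.log (colNorm !![(1 : ℝ), g t - (g t)⁻¹; 0, 1] 1))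
      atTop (nhds α) := by
  have hg0 t : 0 < g t := zero_lt_one.trans_le (hg t)
  simp only [fun t => (svalDesc_shear (hg t)).1, fun t => (svalDesc_shear (hg t)).2,
    fun t => (colNorm_shear (g t - (g t)⁻¹)).1, fun t => (colNorm_shear (g t - (g t)⁻¹)).2,
    log_inv, log_one, mul_zero, mul_neg]
  refine ⟨fun t => ⟨le_rfl, by linarith [inv_pos.mpr (hg0 t)]⟩, hlim, hlim.neg,
    tendsto_const_nhds, tendsto_one_div_mul_log_of_abs_log_sub_le (K := log 2) ?_ hlim⟩
  refine Eventually.of_forall fun t => abs_log_sub_log_le_log (by positivity) (hg0 t) ?_ ?_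
  · linarith [(sqrt_sub_inv_sq_add_one_mem_Icc (hg t)).2, hg0 t]
  · linarith [(sqrt_sub_inv_sq_add_one_mem_Icc (hg t)).1]

/-- For X(t) = [[1, g − g⁻¹],[0,1]] with g(t) ≥ 1 : g ≤ σ₁ ≤ g + g⁻¹ + 1; hence if
(1/t)·ln g(t) → α ≥ 0 then the Lyapunov exponents are α and −α, while the Lyapunov
characteristic exponents of the columns are 0 and α. -/
theorem example_LE_vs_LCE (g : ℝ → ℝ) (hg : ∀ t, 1 ≤ g t) (α : ℝ) (hα : 0 ≤ α)
    (hlim : Tendsto (fun t : ℝ => (1 / t) * Real.log (g t)) atTop (nhds α)) :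
    (∀ t, g t ≤ svalDesc !![(1 : ℝ), g t - (g t)⁻¹; 0, 1] 0 ∧
      svalDesc !![(1 : ℝ), g t - (g t)⁻¹; 0, 1] 0 ≤ g t + (g t)⁻¹ + 1) ∧
    Tendsto (fun t : ℝ => (1 / t) * Real.log (svalDesc !![(1 : ℝ), g t - (g t)⁻¹; 0, 1] 0))
      atTop (nhds α) ∧
    Tendsto (fun t : ℝ => (1 / t) * Real.log (svalDesc !![(1 : ℝ), g t - (g t)⁻¹; 0, 1] 1))
      atTop (nhds (-α)) ∧
    Tendsto (fun t : ℝ => (1 / t) * Real.log (colNorm !![(1 : ℝ), g t - (g t)⁻¹; 0, 1] 0))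
      atTop (nhds 0) ∧
    Tendsto (fun t : ℝ => (1 / t) * Real.log (colNorm !![(1 : ℝ), g t - (g t)⁻¹; 0, 1] 1))
      atTop (nhds α) :=
  example_LE_vs_LCE_general g hg α hlim
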